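/- arXiv:1204.0929 — 5 statements merged into one kernel-verified Lean document; each statement's English description precedes it below -/
import Mathlib

section
/- Let x, y ∈ ℝⁿ. If there exists a doubly stochastic n×n matrix A (nonnegative entries, each row and column summing to 1) with x = A y, then for every convex function f : ℝ → ℝ one has ∑ᵢ f(xᵢ) ≤ ∑ᵢ f(yᵢ). -/
open Finset

theorem ConvexOn.sum_map_le_of_mem_doublyStochastic {𝕜 E β ι : Type*} [Field 𝕜] [LinearOrder 𝕜]
    [IsStrictOrderedRing 𝕜] [AddCommGroup E] [AddCommGroup β] [PartialOrder β]
    [IsOrderedAddMonoid β] [Module 𝕜 E] [Module 𝕜 β] [IsStrictOrderedModule 𝕜 β]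
    [Fintype ι] [DecidableEq ι] {s : Set E} {f : E → β} (hf : ConvexOn 𝕜 s f)
    {A : Matrix ι ι 𝕜} (hA : A ∈ doublyStochastic 𝕜 ι) {y : ι → E} (hy : ∀ j, y j ∈ s) :
    ∑ i, f (∑ j, A i j • y j) ≤ ∑ j, f (y j) :=
  calc ∑ i, f (∑ j, A i j • y j)
      ≤ ∑ i, ∑ j, A i j • f (y j) :=
        sum_le_sum fun i _ => hf.map_sum_le (fun j _ => nonneg_of_mem_doublyStochastic hA)
          (sum_row_of_mem_doublyStochastic hA i) fun j _ => hy j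
    _ = ∑ j, (∑ i, A i j) • f (y j) := by rw [sum_comm]; simp only [sum_smul]
    _ = ∑ j, f (y j) := by simp only [sum_col_of_mem_doublyStochastic hA, one_smul]

theorem stmt_0 (n : ℕ) (x y : Fin n → ℝ) (A : Matrix (Fin n) (Fin n) ℝ)
    (hA : ∀ i j, 0 ≤ A i j)
    (hrow : ∀ i, ∑ j, A i j = 1)
    (hcol : ∀ j, ∑ i, A i j = 1)
    (hx : ∀ i, x i = ∑ j, A i j * y j)
    (f : ℝ → ℝ) (hf : ConvexOn ℝ Set.univ f) :
    ∑ i, f (x i) ≤ ∑ i, f (y i) := by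
  have hA_ds : A ∈ doublyStochastic ℝ (Fin n) := mem_doublyStochastic_iff_sum.2 ⟨hA, hrow, hcol⟩
  simpa only [hx, smul_eq_mul] using
    hf.sum_map_le_of_mem_doublyStochastic hA_ds fun j => Set.mem_univ (y j)
end

section
/- Let x, y ∈ ℝⁿ with x majorized by y (i.e., for each k, the sum of the k largest entries of x is at most the sum of the k largest entries of y, with equality for k = n). Then ∑ᵢ f(xᵢ) ≤ ∑ᵢ f(yᵢ) for every continuous convex function f : ℝ → ℝ. -/
/-!
Sort `x` and `y` increasingly into `u` and `v`. Since a monotone sequence attains its largest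
`k`-subset sum on its top `k` entries, majorization says that `∑ u ≤ ∑ v` over every upper set of
indices, with equality over all indices. The right derivative `c` of `f` is monotone and gives
supporting lines, so `f (v i) - f (u i) ≥ c (u i) * (v i - u i)`; summing the right-hand side by
parts over the superlevel sets of the increasing weights `c ∘ u`, which are upper sets, shows that
it is nonnegative.
-/

open Finset Set

theorem ConvexOn.add_rightDeriv_mul_sub_le {f : ℝ → ℝ} (hf : ConvexOn ℝ univ f) (t w : ℝ) :
    f t + derivWithin f (Ioi t) t * (w - t) ≤ f w := by
  rcases lt_trichotomy w t with hwt | rfl | htw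
  · have hslope : slope f w t ≤ derivWithin f (Ioi t) t :=
      (hf.slope_le_leftDeriv_of_mem_interior (mem_univ w) (by simp) hwt).trans
        (hf.leftDeriv_le_rightDeriv_of_mem_interior (by simp))
    rw [slope_def_field, div_le_iff₀ (sub_pos.2 hwt)] at hslope
    linarith
  · simp
  · have hslope : derivWithin f (Ioi t) t ≤ slope f t w :=
      hf.rightDeriv_le_slope_of_mem_interior (by simp) (mem_univ w) htw
    rw [slope_def_field, le_div_iff₀ (sub_pos.2 htw)] at hslope
    linarith

theorem ConvexOn.monotone_rightDeriv {f : ℝ → ℝ} (hf : ConvexOn ℝ univ f) :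
    Monotone fun t ↦ derivWithin f (Ioi t) t := by
  simpa using hf.monotoneOn_rightDeriv

theorem Finset.sum_le_sum_of_isUpperSet {ι M : Type*} [LinearOrder ι] [AddCommMonoid M]
    [PartialOrder M] [IsOrderedAddMonoid M] {v : ι → M} (hv : Monotone v) {s t : Finset ι}
    (hs : IsUpperSet (s : Set ι)) (hcard : #t = #s) : ∑ i ∈ t, v i ≤ ∑ i ∈ s, v i := by
  rw [← sum_inter_add_sum_sdiff t s, ← sum_inter_add_sum_sdiff s t, inter_comm]
  refine add_le_add le_rfl ?_
  rcases (t \ s).eq_empty_or_nonempty with hts | hts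
  · have hst : s \ t = ∅ := card_eq_zero.1 (by rw [← card_sdiff_comm hcard, hts, card_empty])
    simp [hts, hst]
  · set i₀ := (t \ s).max' hts
    have hi₀ : i₀ ∈ t \ s := max'_mem _ _
    calc ∑ i ∈ t \ s, v i ≤ #(t \ s) • v i₀ :=
          sum_le_card_nsmul _ _ _ fun i hi ↦ hv (le_max' _ i hi)
      _ = #(s \ t) • v i₀ := by rw [card_sdiff_comm hcard]
      _ ≤ ∑ i ∈ s \ t, v i := card_nsmul_le_sum _ _ _ fun j hj ↦ hv ?_
    by_contra! hji
    exact (mem_sdiff.1 hi₀).2 (hs hji.le (mem_sdiff.1 hj).1)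

theorem Finset.sum_mul_nonneg_of_sum_superlevel_nonneg {ι R : Type*} [Fintype ι] [CommRing R]
    [LinearOrder R] [IsStrictOrderedRing R] (b d : ι → R)
    (hd : ∀ r, 0 ≤ ∑ i with r ≤ b i, d i) (hsum : ∑ i, d i = 0) :
    0 ≤ ∑ i, b i * d i := by
  classical
  obtain ⟨V, hb⟩ : ∃ V : Finset R, ∀ i, b i ∈ V :=
    ⟨univ.image b, fun i ↦ mem_image_of_mem b (mem_univ i)⟩
  induction V using Finset.induction_on_max generalizing b with
  | empty => exact (sum_eq_zero fun i _ ↦ absurd (hb i) (notMem_empty _)).ge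
  | insert M V hlt ih =>
    rcases V.eq_empty_or_nonempty with rfl | hV
    · have hconst : ∀ i, b i = M := by simpa using hb
      simp [hconst, ← mul_sum, hsum]
    · set M' := V.max' hV
      have hM' : M' < M := hlt _ (max'_mem V hV)
      -- Lowering the top value `M` of `b` to the next value `M'` removes exactly one layer.
      have hsplit : ∀ i, b i * d i =
          min (b i) M' * d i + (M - M') * if M ≤ b i then d i else 0 := by
        intro i
        rcases mem_insert.1 (hb i) with hi | hi
        · simp [hi, hM'.le]; ring
        · have : b i ≤ M' := le_max' V _ hi
          simp [this, (this.trans_lt hM').not_ge]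
      rw [sum_congr rfl fun i _ ↦ hsplit i, sum_add_distrib, ← mul_sum, ← sum_filter]
      refine add_nonneg (ih _ (fun r ↦ ?_) fun i ↦ ?_) (mul_nonneg (sub_nonneg.2 hM'.le) (hd M))
      · by_cases hr : r ≤ M'
        · simpa [hr] using hd r
        · simp [hr]
      · rcases le_total (b i) M' with h | h
        · rw [min_eq_left h]
          exact (mem_insert.1 (hb i)).resolve_left (h.trans_lt hM').ne
        · rw [min_eq_right h]; exact max'_mem V hV

theorem ConvexOn.sum_le_sum_of_monotone_of_sum_upperSet_le {ι : Type*} [Fintype ι] [Preorder ι]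
    {f : ℝ → ℝ} (hf : ConvexOn ℝ univ f) {u v : ι → ℝ} (hu : Monotone u)
    (hupper : ∀ s : Finset ι, IsUpperSet (s : Set ι) → ∑ i ∈ s, u i ≤ ∑ i ∈ s, v i)
    (hsum : ∑ i, u i = ∑ i, v i) :
    ∑ i, f (u i) ≤ ∑ i, f (v i) := by
  set c := fun t ↦ derivWithin f (Ioi t) t
  have hlayer : 0 ≤ ∑ i, c (u i) * (v i - u i) := by
    refine sum_mul_nonneg_of_sum_superlevel_nonneg _ _ (fun r ↦ ?_)
      (by simp [sum_sub_distrib, hsum])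
    rw [sum_sub_distrib, sub_nonneg]
    refine hupper _ fun i j hij hi ↦ ?_
    simp only [coe_filter, Finset.mem_univ, true_and, Set.mem_ofPred_eq] at hi ⊢
    exact hi.trans (hf.monotone_rightDeriv (hu hij))
  have hsupport : ∀ i, c (u i) * (v i - u i) ≤ f (v i) - f (u i) := fun i ↦
    le_sub_iff_add_le'.2 (hf.add_rightDeriv_mul_sub_le (u i) (v i))
  have := hlayer.trans (sum_le_sum fun i _ ↦ hsupport i)
  rwa [sum_sub_distrib, sub_nonneg] at this

theorem stmt_1_general (n : ℕ) (x y : Fin n → ℝ)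
    (hmaj : ∀ s : Finset (Fin n), ∃ t : Finset (Fin n),
      t.card = s.card ∧ ∑ i ∈ s, x i ≤ ∑ i ∈ t, y i)
    (heq : ∑ i, x i = ∑ i, y i)
    (f : ℝ → ℝ) (hconv : ConvexOn ℝ Set.univ f) :
    ∑ i, f (x i) ≤ ∑ i, f (y i) := by
  set σ := Tuple.sort x
  set τ := Tuple.sort y
  have hupper : ∀ s : Finset (Fin n), IsUpperSet (s : Set (Fin n)) →
      ∑ i ∈ s, x (σ i) ≤ ∑ i ∈ s, y (τ i) := by
    intro s hs
    obtain ⟨t, hcard, hle⟩ := hmaj (s.map σ.toEmbedding)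
    calc ∑ i ∈ s, x (σ i) = ∑ i ∈ s.map σ.toEmbedding, x i := by simp [sum_map]
      _ ≤ ∑ i ∈ t, y i := hle
      _ = ∑ i ∈ t.map τ.symm.toEmbedding, y (τ i) := by simp [sum_map]
      _ ≤ ∑ i ∈ s, y (τ i) :=
        sum_le_sum_of_isUpperSet (Tuple.monotone_sort y) hs (by simpa using hcard)
  have hsum : ∑ i, x (σ i) = ∑ i, y (τ i) := by rw [Equiv.sum_comp σ x, Equiv.sum_comp τ y, heq]
  calc ∑ i, f (x i) = ∑ i, f (x (σ i)) := (Equiv.sum_comp σ fun i ↦ f (x i)).symm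
    _ ≤ ∑ i, f (y (τ i)) :=
      hconv.sum_le_sum_of_monotone_of_sum_upperSet_le (Tuple.monotone_sort x) hupper hsum
    _ = ∑ i, f (y i) := Equiv.sum_comp τ fun i ↦ f (y i)

/-- `x ≺ y` in `ℝⁿ`: for each `k`, the sum of the `k` largest entries of `x` is at most
the sum of the `k` largest entries of `y` (encoded: any `k`-subset sum of `x` is dominated
by some `k`-subset sum of `y`), with equality of the total sums. -/
theorem stmt_1 (n : ℕ) (x y : Fin n → ℝ)
    (hmaj : ∀ s : Finset (Fin n), ∃ t : Finset (Fin n),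
      t.card = s.card ∧ ∑ i ∈ s, x i ≤ ∑ i ∈ t, y i)
    (heq : ∑ i, x i = ∑ i, y i)
    (f : ℝ → ℝ) (hconv : ConvexOn ℝ Set.univ f) (hcont : Continuous f) :
    ∑ i, f (x i) ≤ ∑ i, f (y i) :=
  stmt_1_general n x y hmaj heq f hconv
end

section
/- Let H be a real Hilbert space, and suppose there is a doubly stochastic n×n matrix A with xᵢ = ∑_j a_{ij} y_j for all i. Then for every convex function f : Hⁿ → ℝ that is invariant under permutations of its n coordinates, f(x₁,…,x_n) ≤ f(y₁,…,y_n). -/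
/-!
By Birkhoff's theorem a doubly stochastic matrix is a convex combination `∑ σ, w σ • P_σ` of
permutation matrices, so `x = ∑ σ, w σ • (y ∘ σ)`. Jensen's inequality and the permutation
invariance of `f` give `f x ≤ ∑ σ, w σ * f (y ∘ σ) = f y`.
-/

open Finset

section DoublyStochastic

variable {R E ι : Type*} [Fintype ι] [DecidableEq ι]

lemma Equiv.Perm.sum_permMatrix_smul [Semiring R] [AddCommMonoid E] [Module R E]
    (σ : Equiv.Perm ι) (y : ι → E) (i : ι) : ∑ j, σ.permMatrix R i j • y j = y (σ i) := by
  simp [PEquiv.toMatrix_apply, ite_smul]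

section LinearOrderedField

variable [Field R] [LinearOrder R] [IsStrictOrderedRing R] [AddCommGroup E] [Module R E]
  {A : Matrix ι ι R}

lemma exists_sum_perm_comp_of_mem_doublyStochastic (hA : A ∈ doublyStochastic R ι)
    (y : ι → E) :
    ∃ w : Equiv.Perm ι → R, (∀ σ, 0 ≤ w σ) ∧ ∑ σ, w σ = 1 ∧
      (fun i ↦ ∑ j, A i j • y j) = ∑ σ, w σ • (y ∘ σ) := by
  obtain ⟨w, hw₀, hw₁, rfl⟩ := exists_eq_sum_perm_of_mem_doublyStochastic hA
  refine ⟨w, hw₀, hw₁, funext fun i ↦ ?_⟩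
  simp only [Matrix.sum_apply, Matrix.smul_apply, smul_eq_mul, sum_smul, mul_smul,
    Finset.sum_apply, Pi.smul_apply, Function.comp_apply]
  rw [sum_comm]
  simp only [← smul_sum, Equiv.Perm.sum_permMatrix_smul]

theorem ConvexOn.le_of_mem_doublyStochastic {f : (ι → E) → R} (hf : ConvexOn R Set.univ f)
    (hf_perm : ∀ (σ : Equiv.Perm ι) (z : ι → E), f (z ∘ σ) = f z)
    (hA : A ∈ doublyStochastic R ι) (y : ι → E) :
    f (fun i ↦ ∑ j, A i j • y j) ≤ f y := by
  obtain ⟨w, hw₀, hw₁, hAy⟩ := exists_sum_perm_comp_of_mem_doublyStochastic hA y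
  calc f (fun i ↦ ∑ j, A i j • y j)
      ≤ ∑ σ, w σ • f (y ∘ σ) := by
        rw [hAy]
        exact hf.map_sum_le (fun σ _ ↦ hw₀ σ) hw₁ fun σ _ ↦ Set.mem_univ _
    _ = f y := by simp only [hf_perm, ← sum_smul, hw₁, one_smul]

end LinearOrderedField

end DoublyStochastic

theorem stmt_10_general (H : Type*) [NormedAddCommGroup H] [InnerProductSpace ℝ H]
    (n : ℕ) (x y : Fin n → H) (A : Matrix (Fin n) (Fin n) ℝ)
    (hA : ∀ i j, 0 ≤ A i j) (hrow : ∀ i, ∑ j, A i j = 1) (hcol : ∀ j, ∑ i, A i j = 1)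
    (hx : ∀ i, x i = ∑ j, A i j • y j)
    (f : (Fin n → H) → ℝ) (hconv : ConvexOn ℝ Set.univ f)
    (hsymm : ∀ (π : Equiv.Perm (Fin n)) (z : Fin n → H), f (z ∘ π) = f z) :
    f x ≤ f y := by
  have hA_mem : A ∈ doublyStochastic ℝ (Fin n) :=
    mem_doublyStochastic_iff_sum.2 ⟨hA, hrow, hcol⟩
  rw [funext hx]
  exact hconv.le_of_mem_doublyStochastic hsymm hA_mem y

theorem stmt_10 (H : Type*) [NormedAddCommGroup H] [InnerProductSpace ℝ H] [CompleteSpace H]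
    (n : ℕ) (x y : Fin n → H) (A : Matrix (Fin n) (Fin n) ℝ)
    (hA : ∀ i j, 0 ≤ A i j) (hrow : ∀ i, ∑ j, A i j = 1) (hcol : ∀ j, ∑ i, A i j = 1)
    (hx : ∀ i, x i = ∑ j, A i j • y j)
    (f : (Fin n → H) → ℝ) (hconv : ConvexOn ℝ Set.univ f)
    (hsymm : ∀ (π : Equiv.Perm (Fin n)) (z : Fin n → H), f (z ∘ π) = f z) :
    f x ≤ f y :=
  stmt_10_general H n x y A hA hrow hcol hx f hconv hsymm
end

section
/- Let H be a real Hilbert space and suppose there is a doubly stochastic n×n matrix A with xᵢ = ∑_j a_{ij} y_j for all i. Then for every α ≥ 1, ∑_{1 ≤ i < j ≤ n} ‖xᵢ − x_j‖^α ≤ ∑_{1 ≤ i < j ≤ n} ‖yᵢ − y_j‖^α. -/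
/-!
The distance between two averages `∑ a k • y k` and `∑ b l • y l` is at most the average of the
distances `‖y k - y l‖` under the product weights `a k * b l`, so by Jensen
`φ ‖x i - x j‖ ≤ ∑ k, ∑ l, A i k * A j l * φ ‖y k - y l‖` for every nondecreasing convex `φ`
on `[0, ∞)`. Summing over all `i, j`, the column sums of `A` equal `1` and the weights disappear.
Both sides are symmetric with zero diagonal, so the sums over `i < j` are half the full sums.
-/

open Finset Set

section DoublySum

variable {ι M : Type*} [Fintype ι] [LinearOrder ι] [AddCommMonoid M]

theorem two_nsmul_sum_filter_lt_eq_sum_sum (f : ι → ι → M) (hsymm : ∀ i j, f i j = f j i)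
    (hdiag : ∀ i, f i i = 0) :
    2 • ∑ i, ∑ j ∈ univ.filter (fun j => i < j), f i j = ∑ i, ∑ j, f i j := by
  have hsplit : ∀ i j, f i j = (if i < j then f i j else 0) + (if j < i then f j i else 0) := by
    intro i j
    rcases lt_trichotomy i j with h | rfl | h
    · simp [h, h.not_gt]
    · simp [hdiag]
    · simp [h, h.not_gt, hsymm i j]
  have hswap : ∑ i, ∑ j, (if j < i then f j i else 0) = ∑ i, ∑ j, (if i < j then f i j else 0) :=
    sum_comm
  simp only [sum_filter, two_nsmul]
  nth_rewrite 2 [← hswap]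
  rw [← sum_add_distrib]
  refine sum_congr rfl fun i _ => ?_
  rw [← sum_add_distrib]
  exact sum_congr rfl fun j _ => (hsplit i j).symm

end DoublySum

section Averages

variable {ι E : Type*} [Fintype ι] [NormedAddCommGroup E] [NormedSpace ℝ E]

theorem sum_smul_sub_sum_smul_eq_sum_sum {a b : ι → ℝ} (ha : ∑ k, a k = 1) (hb : ∑ l, b l = 1)
    (y : ι → E) :
    ∑ k, a k • y k - ∑ l, b l • y l = ∑ k, ∑ l, (a k * b l) • (y k - y l) := by
  have hleft : ∑ k, ∑ l, (a k * b l) • y k = ∑ k, a k • y k :=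
    sum_congr rfl fun k _ => by rw [← sum_smul, ← mul_sum, hb, mul_one]
  have hright : ∑ k, ∑ l, (a k * b l) • y l = ∑ l, b l • y l := by
    rw [sum_comm]
    exact sum_congr rfl fun l _ => by rw [← sum_smul, ← sum_mul, ha, one_mul]
  simp only [smul_sub, sum_sub_distrib, hleft, hright]

theorem map_norm_sum_smul_sub_sum_smul_le {φ : ℝ → ℝ} (hφ : ConvexOn ℝ (Ici 0) φ)
    (hmono : MonotoneOn φ (Ici 0)) {a b : ι → ℝ} (ha₀ : ∀ k, 0 ≤ a k) (hb₀ : ∀ l, 0 ≤ b l)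
    (ha : ∑ k, a k = 1) (hb : ∑ l, b l = 1) (y : ι → E) :
    φ ‖∑ k, a k • y k - ∑ l, b l • y l‖ ≤ ∑ k, ∑ l, a k * b l * φ ‖y k - y l‖ := by
  have hw₀ : ∀ p ∈ (univ : Finset (ι × ι)), 0 ≤ a p.1 * b p.2 :=
    fun p _ => mul_nonneg (ha₀ p.1) (hb₀ p.2)
  have hw : ∑ p : ι × ι, a p.1 * b p.2 = 1 := by
    rw [Fintype.sum_prod_type]
    simp only [← mul_sum, hb, mul_one, ha]
  have htriangle : ‖∑ k, a k • y k - ∑ l, b l • y l‖ ≤ ∑ k, ∑ l, a k * b l * ‖y k - y l‖ := by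
    rw [sum_smul_sub_sum_smul_eq_sum_sum ha hb]
    refine (norm_sum_le _ _).trans (sum_le_sum fun k _ => (norm_sum_le _ _).trans ?_)
    refine sum_le_sum fun l _ => ?_
    rw [norm_smul, Real.norm_of_nonneg (mul_nonneg (ha₀ k) (hb₀ l))]
  calc φ ‖∑ k, a k • y k - ∑ l, b l • y l‖
      ≤ φ (∑ p : ι × ι, (a p.1 * b p.2) • ‖y p.1 - y p.2‖) := by
        refine hmono (norm_nonneg _)
          (sum_nonneg fun p hp => smul_nonneg (hw₀ p hp) (norm_nonneg _)) ?_
        simpa only [smul_eq_mul, Fintype.sum_prod_type] using htriangle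
    _ ≤ ∑ p : ι × ι, (a p.1 * b p.2) • φ ‖y p.1 - y p.2‖ :=
        hφ.map_sum_le hw₀ hw fun p _ => norm_nonneg _
    _ = ∑ k, ∑ l, a k * b l * φ ‖y k - y l‖ := by
        simp only [smul_eq_mul, Fintype.sum_prod_type]

variable [DecidableEq ι]

theorem sum_sum_map_norm_sub_le_of_mem_doublyStochastic {φ : ℝ → ℝ}
    (hφ : ConvexOn ℝ (Ici 0) φ) (hmono : MonotoneOn φ (Ici 0)) {A : Matrix ι ι ℝ}
    (hA : A ∈ doublyStochastic ℝ ι) (y : ι → E) :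
    ∑ i, ∑ j, φ ‖∑ k, A i k • y k - ∑ l, A j l • y l‖ ≤ ∑ k, ∑ l, φ ‖y k - y l‖ := by
  obtain ⟨hA₀, hrow, hcol⟩ := mem_doublyStochastic_iff_sum.mp hA
  have hcolsum (F : ι → ℝ) : ∑ i, ∑ k, A i k * F k = ∑ k, F k := by
    rw [sum_comm]
    simp only [← sum_mul, hcol, one_mul]
  have hpull (i : ι) : ∑ j, ∑ k, ∑ l, A i k * A j l * φ ‖y k - y l‖ =
      ∑ k, A i k * ∑ j, ∑ l, A j l * φ ‖y k - y l‖ := by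
    rw [sum_comm]
    simp only [mul_sum, mul_assoc]
  calc ∑ i, ∑ j, φ ‖∑ k, A i k • y k - ∑ l, A j l • y l‖
      ≤ ∑ i, ∑ j, ∑ k, ∑ l, A i k * A j l * φ ‖y k - y l‖ :=
        sum_le_sum fun i _ => sum_le_sum fun j _ =>
          map_norm_sum_smul_sub_sum_smul_le hφ hmono (hA₀ i) (hA₀ j) (hrow i) (hrow j) y
    _ = ∑ k, ∑ l, φ ‖y k - y l‖ := by simp only [hpull, hcolsum]

end Averages

theorem stmt_11_general (H : Type*) [NormedAddCommGroup H] [InnerProductSpace ℝ H]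
    (n : ℕ) (x y : Fin n → H) (A : Matrix (Fin n) (Fin n) ℝ)
    (hA : ∀ i j, 0 ≤ A i j) (hrow : ∀ i, ∑ j, A i j = 1) (hcol : ∀ j, ∑ i, A i j = 1)
    (hx : ∀ i, x i = ∑ j, A i j • y j)
    (α : ℝ) (hα : 1 ≤ α) :
    ∑ i, ∑ j ∈ Finset.univ.filter (fun j => i < j), ‖x i - x j‖ ^ α
      ≤ ∑ i, ∑ j ∈ Finset.univ.filter (fun j => i < j), ‖y i - y j‖ ^ α := by
  have hmono : MonotoneOn (fun t : ℝ => t ^ α) (Ici 0) :=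
    fun s hs t _ hst => Real.rpow_le_rpow hs hst (by linarith)
  have hfull := sum_sum_map_norm_sub_le_of_mem_doublyStochastic (convexOn_rpow hα) hmono
    (mem_doublyStochastic_iff_sum.mpr ⟨hA, hrow, hcol⟩) y
  simp only [← hx] at hfull
  have hhalf (z : Fin n → H) := two_nsmul_sum_filter_lt_eq_sum_sum (fun i j => ‖z i - z j‖ ^ α)
    (fun i j => by rw [norm_sub_rev]) (fun i => by simp [Real.zero_rpow (by linarith : α ≠ 0)])
  have hx_half := hhalf x
  have hy_half := hhalf y
  rw [two_nsmul] at hx_half hy_half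
  linarith

theorem stmt_11 (H : Type*) [NormedAddCommGroup H] [InnerProductSpace ℝ H] [CompleteSpace H]
    (n : ℕ) (x y : Fin n → H) (A : Matrix (Fin n) (Fin n) ℝ)
    (hA : ∀ i j, 0 ≤ A i j) (hrow : ∀ i, ∑ j, A i j = 1) (hcol : ∀ j, ∑ i, A i j = 1)
    (hx : ∀ i, x i = ∑ j, A i j • y j)
    (α : ℝ) (hα : 1 ≤ α) :
    ∑ i, ∑ j ∈ Finset.univ.filter (fun j => i < j), ‖x i - x j‖ ^ α
      ≤ ∑ i, ∑ j ∈ Finset.univ.filter (fun j => i < j), ‖y i - y j‖ ^ α :=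
  stmt_11_general H n x y A hA hrow hcol hx α hα
end

section
/- Let H be a real Hilbert space and suppose there is a doubly stochastic n×n matrix A with xᵢ = ∑_j a_{ij} y_j for all i. Then the point (x₁,…,x_n) ∈ Hⁿ lies in the convex hull of the n! points (y_{π(1)},…,y_{π(n)}), where π ranges over all permutations of {1,…,n}. -/
/-!
By Birkhoff's theorem a doubly stochastic matrix is a convex combination of permutation matrices,
and `A ↦ (i ↦ ∑ j, A i j • y j)` is linear in `A` and sends the permutation matrix of `σ` to `y ∘ σ`.
-/

open Matrix

def Matrix.smulTupleLinearMap {R M n : Type*} [CommSemiring R] [AddCommMonoid M] [Module R M]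
    [Fintype n] (y : n → M) : Matrix n n R →ₗ[R] n → M where
  toFun B i := ∑ j, B i j • y j
  map_add' B C := by ext i; simp [add_smul, Finset.sum_add_distrib]
  map_smul' c B := by ext i; simp [mul_smul, Finset.smul_sum]

theorem Matrix.smulTupleLinearMap_permMatrix {R M n : Type*} [CommSemiring R] [AddCommMonoid M]
    [Module R M] [Fintype n] [DecidableEq n] (y : n → M) (σ : Equiv.Perm n) :
    smulTupleLinearMap y (σ.permMatrix R) = y ∘ σ := by
  ext i
  simp [smulTupleLinearMap, PEquiv.toMatrix_apply, Equiv.toPEquiv_apply]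

theorem mem_convexHull_comp_perm_of_mem_doublyStochastic {R M n : Type*} [Field R] [LinearOrder R]
    [IsStrictOrderedRing R] [AddCommGroup M] [Module R M] [Fintype n] [DecidableEq n]
    {A : Matrix n n R} (hA : A ∈ doublyStochastic R n) (y : n → M) :
    (fun i => ∑ j, A i j • y j) ∈ convexHull R (Set.range fun σ : Equiv.Perm n => y ∘ σ) := by
  rw [← SetLike.mem_coe, doublyStochastic_eq_convexHull_permMatrix] at hA
  have himage : smulTupleLinearMap y '' {σ.permMatrix R | σ : Equiv.Perm n} =
      Set.range fun σ : Equiv.Perm n => y ∘ σ := by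
    ext z
    simp [smulTupleLinearMap_permMatrix]
  have hmem := Set.mem_image_of_mem (smulTupleLinearMap y) hA
  rwa [LinearMap.image_convexHull, himage] at hmem

theorem stmt_12_general (H : Type*) [NormedAddCommGroup H] [InnerProductSpace ℝ H]
    (n : ℕ) (x y : Fin n → H) (A : Matrix (Fin n) (Fin n) ℝ)
    (hA : ∀ i j, 0 ≤ A i j) (hrow : ∀ i, ∑ j, A i j = 1) (hcol : ∀ j, ∑ i, A i j = 1)
    (hx : ∀ i, x i = ∑ j, A i j • y j) :
    x ∈ convexHull ℝ (Set.range fun π : Equiv.Perm (Fin n) => y ∘ π) := by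
  rw [funext hx]
  exact mem_convexHull_comp_perm_of_mem_doublyStochastic
    (mem_doublyStochastic_iff_sum.2 ⟨hA, hrow, hcol⟩) y

theorem stmt_12 (H : Type*) [NormedAddCommGroup H] [InnerProductSpace ℝ H] [CompleteSpace H]
    (n : ℕ) (x y : Fin n → H) (A : Matrix (Fin n) (Fin n) ℝ)
    (hA : ∀ i j, 0 ≤ A i j) (hrow : ∀ i, ∑ j, A i j = 1) (hcol : ∀ j, ∑ i, A i j = 1)
    (hx : ∀ i, x i = ∑ j, A i j • y j) :
    x ∈ convexHull ℝ (Set.range fun π : Equiv.Perm (Fin n) => y ∘ π) :=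
  stmt_12_general H n x y A hA hrow hcol hx
end
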